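/- arXiv:2206.08793 — 2 statements merged into one kernel-verified Lean document; each statement's English description precedes it below -/
import Mathlib

section
/- Let U_k ∈ ℝ^{n×k} have orthonormal columns with orthogonal complement basis Ū_k ∈ ℝ^{n×(n−k)} (so U_kU_kᵀ + Ū_kŪ_kᵀ = I_n). Let Z ∈ ℝ^{n×p} be full column rank, set Ω_k = U_kᵀZ and Ω̄_k = Ū_kᵀZ, and assume Ω_k has full row rank k. Then with T_k = Ω̄_k Ω_k⁺ and S_k = (I_{n−k} + T_kT_kᵀ)^{−1/2} T_k, one has U_kᵀ[I_n − π(Z)]U_k ⪯ S_kᵀS_k ⪯ T_kᵀT_k in the Loewner order. -/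
/-!
Write `Ω = Ukᵀ Z`, `Ω̄ = Ubarᵀ Z`, `T = Ω̄ Ω⁺` and `Ẑ = Z Ω⁺`. Since `Uk Ukᵀ + Ubar Ubarᵀ = 1` and
`Ω Ω⁺ = 1`, the Gram matrix of `Ẑ` is `A = 1 + TᵀT`, and `Ukᵀ Ẑ = 1`. The push-through identity
gives `SᵀS = Tᵀ (1 + TTᵀ)⁻¹ T = 1 - A⁻¹ = Ukᵀ π(Ẑ) Uk`. As `range Ẑ ⊆ range Z`, `π(Z) - π(Ẑ)` is
again an orthogonal projection, so `SᵀS - Ukᵀ (1 - π(Z)) Uk = Ukᵀ (π(Z) - π(Ẑ)) Uk ⪰ 0`.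
Finally `TᵀT - SᵀS = A - 2 + A⁻¹ = (TᵀT) A⁻¹ (TᵀT) ⪰ 0`.
-/

open Matrix

noncomputable def proj {n p : ℕ} (Z : Matrix (Fin n) (Fin p) ℝ) : Matrix (Fin n) (Fin n) ℝ :=
  Z * (Zᵀ * Z)⁻¹ * Zᵀ

noncomputable def pinvRow {k p : ℕ} (Ω : Matrix (Fin k) (Fin p) ℝ) : Matrix (Fin p) (Fin k) ℝ :=
  Ωᵀ * (Ω * Ωᵀ)⁻¹

lemma onePlusMulSelfT_psd {l k : ℕ} (T : Matrix (Fin l) (Fin k) ℝ) :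
    ((1 : Matrix (Fin l) (Fin l) ℝ) + T * Tᵀ).PosSemidef := by
  have h2 : (T * Tᵀ).PosSemidef := by
    simpa [Matrix.conjTranspose_eq_transpose_of_trivial] using Matrix.posSemidef_self_mul_conjTranspose T
  exact Matrix.PosSemidef.one.add h2

noncomputable def Matrix.PosSemidef.sqrt {n : Type*} [Fintype n] [DecidableEq n]
    {A : Matrix n n ℝ} (hA : A.PosSemidef) : Matrix n n ℝ :=
  hA.1.eigenvectorUnitary.1 * diagonal ((√·) ∘ hA.1.eigenvalues) *
    (star hA.1.eigenvectorUnitary : Matrix n n ℝ)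

noncomputable def sineMat {l k : ℕ} (T : Matrix (Fin l) (Fin k) ℝ) : Matrix (Fin l) (Fin k) ℝ :=
  ((onePlusMulSelfT_psd T).sqrt)⁻¹ * T

namespace Matrix

variable {m n : Type*} [Fintype m] [Fintype n]

theorem isUnit_of_rank_eq_card [DecidableEq n] {K : Type*} [Field K] {A : Matrix n n K}
    (h : A.rank = Fintype.card n) : IsUnit A := by
  have hrange : LinearMap.range A.mulVecLin = ⊤ :=
    Submodule.eq_top_of_finrank_eq (by simpa [rank] using h)
  exact mulVec_surjective_iff_isUnit.mp (LinearMap.range_eq_top.mp hrange)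

theorem posSemidef_of_isHermitian_of_mul_self_eq {R : Type*} [CommRing R] [PartialOrder R]
    [StarRing R] [StarOrderedRing R] {P : Matrix n n R}
    (hP : P.IsHermitian) (hPP : P * P = P) : P.PosSemidef := by
  simpa only [hP.eq, hPP] using posSemidef_conjTranspose_mul_self P

theorem posDef_one_add_mul_transpose [DecidableEq n] (T : Matrix n m ℝ) : (1 + T * Tᵀ).PosDef := by
  refine PosDef.one.add_posSemidef ?_
  simpa only [conjTranspose_eq_transpose_of_trivial] using posSemidef_self_mul_conjTranspose T

theorem posDef_one_add_transpose_mul [DecidableEq m] (T : Matrix n m ℝ) : (1 + Tᵀ * T).PosDef := by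
  simpa only [transpose_transpose] using posDef_one_add_mul_transpose Tᵀ

theorem transpose_mul_inv_one_add_mul_transpose_mul [DecidableEq m] [DecidableEq n]
    (T : Matrix n m ℝ) :
    Tᵀ * (1 + T * Tᵀ)⁻¹ * T = 1 - (1 + Tᵀ * T)⁻¹ := by
  have h := add_mul_mul_inv_eq_sub (1 : Matrix m m ℝ) Tᵀ 1 T isUnit_one isUnit_one
    (by simpa using (posDef_one_add_mul_transpose T).isUnit)
  simp only [inv_one, Matrix.mul_one, Matrix.one_mul] at h
  rw [h, sub_sub_cancel]

theorem PosSemidef.sqrt_mul_self [DecidableEq n] {A : Matrix n n ℝ} (hA : A.PosSemidef) :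
    hA.sqrt * hA.sqrt = A := by
  set V : Matrix n n ℝ := (hA.1.eigenvectorUnitary : Matrix n n ℝ)
  set D : Matrix n n ℝ := diagonal ((√·) ∘ hA.1.eigenvalues)
  have hV : star V * V = 1 := Unitary.star_mul_self_of_mem hA.1.eigenvectorUnitary.2
  have hD : D * D = diagonal hA.1.eigenvalues := by
    rw [diagonal_mul_diagonal]
    exact congrArg diagonal (funext fun i ↦ Real.mul_self_sqrt (hA.eigenvalues_nonneg i))
  calc hA.sqrt * hA.sqrt = V * (D * (star V * V) * D) * star V := by
        simp only [PosSemidef.sqrt, V, D, Matrix.mul_assoc]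
    _ = A := by
      rw [hV, Matrix.mul_one, hD]
      conv_rhs => rw [hA.1.spectral_theorem, Unitary.conjStarAlgAut_apply]
      simp [V]

theorem PosSemidef.transpose_sqrt [DecidableEq n] {A : Matrix n n ℝ} (hA : A.PosSemidef) :
    (hA.sqrt)ᵀ = hA.sqrt := by
  simp [PosSemidef.sqrt, star_eq_conjTranspose, conjTranspose_eq_transpose_of_trivial,
    transpose_mul, Matrix.mul_assoc]

end Matrix

section Sine

variable {l k : ℕ}

theorem sineMat_transpose_mul_self (T : Matrix (Fin l) (Fin k) ℝ) :
    (sineMat T)ᵀ * sineMat T = 1 - (1 + Tᵀ * T)⁻¹ := by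
  set H := (onePlusMulSelfT_psd T).sqrt
  have hHH : H * H = 1 + T * Tᵀ := (onePlusMulSelfT_psd T).sqrt_mul_self
  have hHt : Hᵀ = H := (onePlusMulSelfT_psd T).transpose_sqrt
  calc (sineMat T)ᵀ * sineMat T = Tᵀ * (H⁻¹ * H⁻¹) * T := by
        simp only [sineMat, transpose_mul, transpose_nonsing_inv, hHt, Matrix.mul_assoc, H]
    _ = 1 - (1 + Tᵀ * T)⁻¹ := by
        rw [← Matrix.mul_inv_rev, hHH, transpose_mul_inv_one_add_mul_transpose_mul]

theorem posSemidef_transpose_mul_self_sub_sineMat (T : Matrix (Fin l) (Fin k) ℝ) :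
    (Tᵀ * T - (sineMat T)ᵀ * sineMat T).PosSemidef := by
  have hA := posDef_one_add_transpose_mul T
  have hdet : IsUnit (1 + Tᵀ * T).det := (isUnit_iff_isUnit_det _).mp hA.isUnit
  have key : Tᵀ * T - (1 - (1 + Tᵀ * T)⁻¹) = (Tᵀ * T) * (1 + Tᵀ * T)⁻¹ * (Tᵀ * T)ᴴ := by
    have h : ∀ A : Matrix (Fin k) (Fin k) ℝ, A * A⁻¹ = 1 → A⁻¹ * A = 1 →
        A - 1 - (1 - A⁻¹) = (A - 1) * A⁻¹ * (A - 1) := by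
      intro A h₁ h₂
      simp only [sub_mul, mul_sub, h₁, h₂, Matrix.one_mul, Matrix.mul_one]
    simpa [conjTranspose_eq_transpose_of_trivial] using
      h _ (mul_nonsing_inv _ hdet) (nonsing_inv_mul _ hdet)
  rw [sineMat_transpose_mul_self, key]
  exact hA.inv.posSemidef.mul_mul_conjTranspose_same _

end Sine

section Projection

variable {n p q : ℕ}

theorem proj_transpose (Z : Matrix (Fin n) (Fin p) ℝ) : (proj Z)ᵀ = proj Z := by
  simp [proj, transpose_mul, transpose_nonsing_inv, Matrix.mul_assoc]

theorem proj_mul_self {Z : Matrix (Fin n) (Fin p) ℝ} (hZ : IsUnit (Zᵀ * Z).det) :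
    proj Z * Z = Z := by
  rw [proj, Matrix.mul_assoc, Matrix.mul_assoc, nonsing_inv_mul _ hZ, Matrix.mul_one]

theorem proj_mul_proj_of_proj_mul_eq {Z : Matrix (Fin n) (Fin p) ℝ} {W : Matrix (Fin n) (Fin q) ℝ}
    (hZW : proj Z * W = W) : proj Z * proj W = proj W := by
  simp only [proj, ← Matrix.mul_assoc] at hZW ⊢
  rw [hZW]

theorem proj_mul_proj_self {Z : Matrix (Fin n) (Fin p) ℝ} (hZ : IsUnit (Zᵀ * Z).det) :
    proj Z * proj Z = proj Z :=
  proj_mul_proj_of_proj_mul_eq (proj_mul_self hZ)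

theorem posSemidef_proj_sub_proj {Z : Matrix (Fin n) (Fin p) ℝ} {W : Matrix (Fin n) (Fin q) ℝ}
    (hZ : IsUnit (Zᵀ * Z).det) (hW : IsUnit (Wᵀ * W).det) (hZW : proj Z * W = W) :
    (proj Z - proj W).PosSemidef := by
  have hPQ := proj_mul_proj_of_proj_mul_eq hZW
  have hQP : proj W * proj Z = proj W := by
    simpa only [transpose_mul, proj_transpose] using congrArg transpose hPQ
  refine posSemidef_of_isHermitian_of_mul_self_eq ?_ ?_
  · simp [IsHermitian, conjTranspose_eq_transpose_of_trivial, proj_transpose]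
  · simp only [sub_mul, mul_sub, proj_mul_proj_self hZ, proj_mul_proj_self hW, hPQ, hQP]
    abel

theorem transpose_mul_proj_mul_of_transpose_mul_eq_one {U W : Matrix (Fin n) (Fin q) ℝ}
    (h : Uᵀ * W = 1) : Uᵀ * proj W * U = (Wᵀ * W)⁻¹ := by
  have h' : Wᵀ * U = 1 := by simpa using congrArg transpose h
  simp only [proj, ← Matrix.mul_assoc, h, Matrix.one_mul]
  rw [Matrix.mul_assoc, h', Matrix.mul_one]

end Projection

theorem mul_pinvRow {k p : ℕ} {Ω : Matrix (Fin k) (Fin p) ℝ} (h : IsUnit (Ω * Ωᵀ).det) :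
    Ω * pinvRow Ω = 1 := by
  rw [pinvRow, ← Matrix.mul_assoc, mul_nonsing_inv _ h]

theorem gram_eq_one_add_of_mul_transpose_add {n k l p : ℕ} {U : Matrix (Fin n) (Fin k) ℝ}
    {V : Matrix (Fin n) (Fin l) ℝ} (hUV : U * Uᵀ + V * Vᵀ = 1) {Z : Matrix (Fin n) (Fin p) ℝ}
    {X : Matrix (Fin p) (Fin k) ℝ} (hX : Uᵀ * Z * X = 1) :
    (Z * X)ᵀ * (Z * X) = 1 + (Vᵀ * Z * X)ᵀ * (Vᵀ * Z * X) := by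
  calc (Z * X)ᵀ * (Z * X) = (Z * X)ᵀ * ((U * Uᵀ + V * Vᵀ) * (Z * X)) := by rw [hUV, Matrix.one_mul]
    _ = (Uᵀ * Z * X)ᵀ * (Uᵀ * Z * X) + (Vᵀ * Z * X)ᵀ * (Vᵀ * Z * X) := by
        simp only [transpose_mul, transpose_transpose, Matrix.add_mul, Matrix.mul_add,
          Matrix.mul_assoc]
    _ = 1 + (Vᵀ * Z * X)ᵀ * (Vᵀ * Z * X) := by rw [hX, transpose_one, Matrix.one_mul]

theorem sine_bound_general {n k p : ℕ}
    (Uk : Matrix (Fin n) (Fin k) ℝ) (Ubar : Matrix (Fin n) (Fin (n - k)) ℝ)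
    (hUk : Ukᵀ * Uk = 1)
    (hfull : Uk * Ukᵀ + Ubar * Ubarᵀ = 1)
    (Z : Matrix (Fin n) (Fin p) ℝ) (hZ : Z.rank = p)
    (hΩ : (Ukᵀ * Z).rank = k) :
    ((sineMat ((Ubarᵀ * Z) * pinvRow (Ukᵀ * Z)))ᵀ * sineMat ((Ubarᵀ * Z) * pinvRow (Ukᵀ * Z)) -
        Ukᵀ * ((1 : Matrix (Fin n) (Fin n) ℝ) - proj Z) * Uk).PosSemidef ∧
      (((Ubarᵀ * Z) * pinvRow (Ukᵀ * Z))ᵀ * ((Ubarᵀ * Z) * pinvRow (Ukᵀ * Z)) -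
        (sineMat ((Ubarᵀ * Z) * pinvRow (Ukᵀ * Z)))ᵀ *
          sineMat ((Ubarᵀ * Z) * pinvRow (Ukᵀ * Z))).PosSemidef := by
  set T := Ubarᵀ * Z * pinvRow (Ukᵀ * Z)
  set Zh := Z * pinvRow (Ukᵀ * Z)
  have hZZ : IsUnit (Zᵀ * Z).det := (isUnit_iff_isUnit_det _).mp <|
    isUnit_of_rank_eq_card (by rw [rank_transpose_mul_self, hZ, Fintype.card_fin])
  have hΩΩ : IsUnit ((Ukᵀ * Z) * (Ukᵀ * Z)ᵀ).det := (isUnit_iff_isUnit_det _).mp <|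
    isUnit_of_rank_eq_card (by rw [rank_self_mul_transpose, hΩ, Fintype.card_fin])
  have hUZh : Ukᵀ * Zh = 1 := by rw [← Matrix.mul_assoc]; exact mul_pinvRow hΩΩ
  have hgram : Zhᵀ * Zh = 1 + Tᵀ * T :=
    gram_eq_one_add_of_mul_transpose_add hfull (by rw [Matrix.mul_assoc]; exact hUZh)
  have hZhZh : IsUnit (Zhᵀ * Zh).det := by
    rw [hgram, ← isUnit_iff_isUnit_det]
    exact (posDef_one_add_transpose_mul T).isUnit
  refine ⟨?_, posSemidef_transpose_mul_self_sub_sineMat T⟩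
  have hdiff : (sineMat T)ᵀ * sineMat T - Ukᵀ * (1 - proj Z) * Uk =
      Ukᵀ * (proj Z - proj Zh) * Uk := by
    rw [sineMat_transpose_mul_self, ← hgram, ← transpose_mul_proj_mul_of_transpose_mul_eq_one hUZh]
    simp only [Matrix.mul_sub, Matrix.sub_mul, Matrix.mul_one, hUk]
    abel
  have hproj : (proj Z - proj Zh).PosSemidef :=
    posSemidef_proj_sub_proj hZZ hZhZh (by rw [← Matrix.mul_assoc, proj_mul_self hZZ])
  rw [hdiff]
  simpa only [conjTranspose_eq_transpose_of_trivial] using hproj.conjTranspose_mul_mul_same Uk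

/-- Lemma 1 of the paper: `Uₖᵀ (I − π(Z)) Uₖ ⪯ SₖᵀSₖ ⪯ TₖᵀTₖ`. -/
theorem sine_bound {n k p : ℕ}
    (Uk : Matrix (Fin n) (Fin k) ℝ) (Ubar : Matrix (Fin n) (Fin (n - k)) ℝ)
    (hUk : Ukᵀ * Uk = 1) (hUbar : Ubarᵀ * Ubar = 1)
    (hfull : Uk * Ukᵀ + Ubar * Ubarᵀ = 1)
    (Z : Matrix (Fin n) (Fin p) ℝ) (hZ : Z.rank = p)
    (hΩ : (Ukᵀ * Z).rank = k) :
    ((sineMat ((Ubarᵀ * Z) * pinvRow (Ukᵀ * Z)))ᵀ * sineMat ((Ubarᵀ * Z) * pinvRow (Ukᵀ * Z)) -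
        Ukᵀ * ((1 : Matrix (Fin n) (Fin n) ℝ) - proj Z) * Uk).PosSemidef ∧
      (((Ubarᵀ * Z) * pinvRow (Ukᵀ * Z))ᵀ * ((Ubarᵀ * Z) * pinvRow (Ukᵀ * Z)) -
        (sineMat ((Ubarᵀ * Z) * pinvRow (Ukᵀ * Z)))ᵀ *
          sineMat ((Ubarᵀ * Z) * pinvRow (Ukᵀ * Z))).PosSemidef :=
  sine_bound_general Uk Ubar hUk hfull Z hZ hΩ
end

section
/- Let A ∈ ℝ^{n×m} with σ₁ ≥ … ≥ σ_m its singular values, SVD blocks U_k, Ū_k, Σ_k, Σ̄_k. Then AAᵀ ⪯ U_k Σ̂_k² U_kᵀ + σ_{k+1}² I_n in the Loewner order, where Σ̂_k² = Σ_k² − σ_{k+1}² I_k. -/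
/-!
Since `U_k U_kᵀ + Ū_k Ū_kᵀ = I`, the scalar matrix `σ_{k+1}² I` splits along the two blocks, and the
`U_k`-parts cancel: the difference of the two sides is the congruence `Ū_k (σ_{k+1}² I − Σ̄_k Σ̄_kᵀ) Ū_kᵀ`
of a positive semidefinite matrix.
-/

open Matrix

namespace Matrix

variable {R ι κ ν : Type*} [CommRing R] [Fintype κ] [Fintype ν]
  [DecidableEq ι] [DecidableEq κ] [DecidableEq ν]

lemma mul_sub_smul_one_mul_transpose_add_smul_one_sub {U : Matrix ι κ R} {V : Matrix ι ν R}
    (hUV : U * Uᵀ + V * Vᵀ = 1) (D : Matrix κ κ R) (S : Matrix ν ν R) (c : R) :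
    U * (D - c • 1) * Uᵀ + c • 1 - (U * D * Uᵀ + V * S * Vᵀ) = V * (c • 1 - S) * Vᵀ := by
  have hc : c • (1 : Matrix ι ι R) =
      U * (c • (1 : Matrix κ κ R)) * Uᵀ + V * (c • (1 : Matrix ν ν R)) * Vᵀ := by
    simp only [Matrix.mul_smul, Matrix.smul_mul, Matrix.mul_one, ← smul_add, hUV]
  rw [hc]
  simp only [Matrix.mul_sub, Matrix.sub_mul]
  abel

end Matrix

theorem key_loewner_bound_general {n m k : ℕ}
    (A : Matrix (Fin n) (Fin m) ℝ)
    (Uk : Matrix (Fin n) (Fin k) ℝ) (Ubar : Matrix (Fin n) (Fin (n - k)) ℝ)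
    (σ : Fin k → ℝ) (Sigb : Matrix (Fin (n - k)) (Fin (m - k)) ℝ) (σk1 : ℝ)
    (hUfull : Uk * Ukᵀ + Ubar * Ubarᵀ = 1)
    (hAAT : A * Aᵀ =
      Uk * Matrix.diagonal (fun i => σ i ^ 2) * Ukᵀ + Ubar * (Sigb * Sigbᵀ) * Ubarᵀ)
    (hSigb : ((σk1 ^ 2) • (1 : Matrix (Fin (n - k)) (Fin (n - k)) ℝ) - Sigb * Sigbᵀ).PosSemidef) :
    (Uk * Matrix.diagonal (fun i => σ i ^ 2 - σk1 ^ 2) * Ukᵀ +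
        (σk1 ^ 2) • (1 : Matrix (Fin n) (Fin n) ℝ) - A * Aᵀ).PosSemidef := by
  have hdiag : diagonal (fun i => σ i ^ 2 - σk1 ^ 2) =
      diagonal (fun i => σ i ^ 2) - (σk1 ^ 2) • (1 : Matrix (Fin k) (Fin k) ℝ) := by
    rw [smul_one_eq_diagonal, diagonal_sub]
  rw [hdiag, hAAT, mul_sub_smul_one_mul_transpose_add_smul_one_sub hUfull]
  simpa only [conjTranspose_eq_transpose_of_trivial] using hSigb.mul_mul_conjTranspose_same Ubar

/-- Key matrix inequality in the proof of Theorem 2: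
`AAᵀ ⪯ U_k Σ̂_k² U_kᵀ + σ_{k+1}² I_n` where `Σ̂_k² = Σ_k² − σ_{k+1}² I_k`. -/
theorem key_loewner_bound {n m k : ℕ}
    (A : Matrix (Fin n) (Fin m) ℝ)
    (Uk : Matrix (Fin n) (Fin k) ℝ) (Ubar : Matrix (Fin n) (Fin (n - k)) ℝ)
    (σ : Fin k → ℝ) (Sigb : Matrix (Fin (n - k)) (Fin (m - k)) ℝ) (σk1 : ℝ)
    (hUk : Ukᵀ * Uk = 1)
    (hUfull : Uk * Ukᵀ + Ubar * Ubarᵀ = 1)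
    (hAAT : A * Aᵀ =
      Uk * Matrix.diagonal (fun i => σ i ^ 2) * Ukᵀ + Ubar * (Sigb * Sigbᵀ) * Ubarᵀ)
    (hSigb : ((σk1 ^ 2) • (1 : Matrix (Fin (n - k)) (Fin (n - k)) ℝ) - Sigb * Sigbᵀ).PosSemidef) :
    (Uk * Matrix.diagonal (fun i => σ i ^ 2 - σk1 ^ 2) * Ukᵀ +
        (σk1 ^ 2) • (1 : Matrix (Fin n) (Fin n) ℝ) - A * Aᵀ).PosSemidef :=
  key_loewner_bound_general A Uk Ubar σ Sigb σk1 hUfull hAAT hSigb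
end
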